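/- arXiv:1610.00341 — 2 statements merged into one kernel-verified Lean document; each statement's English description precedes it below -/
import Mathlib

section
/- Let P be a lattice (d,k)-polytope and let u, v be two vertices of P. If I ⊆ {1,…,d} is a set of coordinate indices with |I| ≤ 3 such that u_i + v_i ≤ k for every i ∈ I, then the graph distance between u and v satisfies d(u,v) ≤ δ(d−|I|, k) + Σ_{i∈I} (u_i + v_i). -/
open scoped BigOperators

/-- A lattice `(d,k)`-polytope: the convex hull in `ℝ^d` of a finite set of points
all of whose coordinates are integers between `0` and `k`. -/
def IsLatticePolytope (d k : ℕ) (P : Set (Fin d → ℝ)) : Prop :=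
  ∃ V : Finset (Fin d → ℝ),
    (∀ v ∈ V, ∀ i : Fin d, ∃ n : ℕ, n ≤ k ∧ v i = n) ∧
    P = convexHull ℝ (V : Set (Fin d → ℝ))

/-- The graph of a polytope `P`: its nodes are the vertices (extreme points) of `P`,
and `u`, `v` are adjacent when the segment `[u,v]` is a `1`-dimensional face
(an extreme subset) of `P`. -/
def polytopeGraph {d : ℕ} (P : Set (Fin d → ℝ)) : SimpleGraph (Fin d → ℝ) where
  Adj u v := u ≠ v ∧ u ∈ P.extremePoints ℝ ∧ v ∈ P.extremePoints ℝ ∧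
    IsExtreme ℝ P (segment ℝ u v)
  symm := by
    constructor
    rintro u v ⟨h1, h2, h3, h4⟩
    exact ⟨h1.symm, h3, h2, by rwa [segment_symm]⟩
  loopless := by constructor; rintro u ⟨h1, -⟩; exact h1 rfl

/-- The diameter `δ(P)` of the graph of a polytope `P`. -/
noncomputable def polyDiam {d : ℕ} (P : Set (Fin d → ℝ)) : ℕ :=
  sSup { n : ℕ | ∃ u ∈ P.extremePoints ℝ, ∃ v ∈ P.extremePoints ℝ,
    (polytopeGraph P).dist u v = n }

/-- The distance `d(u,F)` from a vertex `u` of `P` to a face `F` of `P`: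
the minimum over the vertices `v` of `F` of the graph distance `d(u,v)`. -/
noncomputable def distToFace {d : ℕ} (P : Set (Fin d → ℝ)) (u : Fin d → ℝ)
    (F : Set (Fin d → ℝ)) : ℕ :=
  sInf { n : ℕ | ∃ v ∈ F.extremePoints ℝ, (polytopeGraph P).dist u v = n }

/-- `δ(d,k)`: the largest possible diameter of the graph of a lattice `(d,k)`-polytope. -/
noncomputable def latticeDiam (d k : ℕ) : ℕ :=
  sSup { n : ℕ | ∃ P : Set (Fin d → ℝ), IsLatticePolytope d k P ∧ polyDiam P = n }

/-!
Put `φ = ∑_{i ∈ I} x_i`. It is integral on the vertices, and from a vertex that does not minimize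
`φ` some edge strictly decreases `φ`. Hence `u` and `v` reach vertices `u'`, `v'` of the face `F`
where `φ` is minimal in at most `φ u - min φ` and `φ v - min φ` steps. Fix `j ∈ I`. On `F` the
coordinate `x_j` is determined by the others, so deleting it maps `F` affinely and injectively
onto a lattice `(d - 1, k)`-polytope `Q` whose edges lift to edges of `P`. By induction on `|I|`,
`d(u', v') ≤ δ(d - |I|, k) + ∑_{I \ {j}} (u'_i + v'_i) ≤ δ(d - |I|, k) + 2 min φ`,
as `u'_j, v'_j ≥ 0`.

An edge along which `φ` decreases is found by tilting `φ` with a functional exposing the vertex,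
which cuts out a face through the vertex on which `φ` is smaller, and shrinking that face to an edge.
-/

open Set Finset

section Module

variable {E F : Type*} [AddCommGroup E] [Module ℝ E] [AddCommGroup F] [Module ℝ F]

theorem isExtreme_setOf_eq_of_le {A : Set E} (f : E →ₗ[ℝ] ℝ) {m : ℝ} (hA : ∀ x ∈ A, m ≤ f x) :
    IsExtreme ℝ A {x ∈ A | f x = m} := by
  refine ⟨fun x hx => hx.1, ?_⟩
  rintro x₁ hx₁ x₂ hx₂ _ ⟨-, hz⟩ ⟨a, b, ha, hb, hab, rfl⟩
  have h₁ := hA x₁ hx₁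
  have h₂ := hA x₂ hx₂
  have hsum : a * (f x₁ - m) + b * (f x₂ - m) = 0 := by
    linear_combination (by simpa using hz : a * f x₁ + b * f x₂ = m) - m * hab
  exact ⟨hx₁, by nlinarith [mul_nonneg hb.le (sub_nonneg.2 h₂)]⟩

theorem isExtreme_image_iff {S B : Set E} (π : E →ₗ[ℝ] F) (hS : Convex ℝ S) (hπ : InjOn π S)
    (hB : B ⊆ S) : IsExtreme ℝ (π '' S) (π '' B) ↔ IsExtreme ℝ S B := by
  have himage (a b : E) : π '' openSegment ℝ a b = openSegment ℝ (π a) (π b) := by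
    simpa using image_openSegment ℝ π.toAffineMap a b
  constructor
  · refine fun h => ⟨hB, fun x₁ hx₁ x₂ hx₂ z hz hzs => ?_⟩
    obtain ⟨b, hb, e⟩ := h.2 (mem_image_of_mem π hx₁) (mem_image_of_mem π hx₂)
      (mem_image_of_mem π hz) (himage x₁ x₂ ▸ mem_image_of_mem π hzs)
    exact hπ (hB hb) hx₁ e ▸ hb
  · refine fun h => ⟨image_mono h.1, ?_⟩
    rintro _ ⟨x₁, hx₁, rfl⟩ _ ⟨x₂, hx₂, rfl⟩ _ ⟨b, hb, rfl⟩ hbs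
    obtain ⟨z, hz, hzb⟩ := himage x₁ x₂ ▸ hbs
    obtain rfl := hπ (hS.openSegment_subset hx₁ hx₂ hz) (hB hb) hzb
    exact mem_image_of_mem π (h.2 hx₁ hx₂ hb hz)

theorem image_mem_extremePoints_image_iff {S : Set E} (π : E →ₗ[ℝ] F) (hS : Convex ℝ S)
    (hπ : InjOn π S) {x : E} (hx : x ∈ S) :
    π x ∈ (π '' S).extremePoints ℝ ↔ x ∈ S.extremePoints ℝ := by
  rw [← isExtreme_singleton, ← image_singleton,
    isExtreme_image_iff π hS hπ (singleton_subset_iff.2 hx), isExtreme_singleton]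

end Module

theorem exists_supporting_slope {α : Type*} {T : Finset α} {u : α} (g h : α → ℝ)
    (hh : ∀ y ∈ T, y ≠ u → h y < h u) (hne : ∃ y ∈ T, y ≠ u) :
    ∃ r : ℝ, (∀ y ∈ T, g u + r * (h u - h y) ≤ g y) ∧
      ∃ z ∈ T, z ≠ u ∧ g z = g u + r * (h u - h z) := by
  classical
  obtain ⟨y₀, hy₀, hy₀u⟩ := hne
  obtain ⟨z, hz, hmin⟩ := (T.erase u).exists_min_image (fun y => (g y - g u) / (h u - h y))
    ⟨y₀, mem_erase.2 ⟨hy₀u, hy₀⟩⟩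
  obtain ⟨hzu, hzT⟩ := mem_erase.1 hz
  refine ⟨(g z - g u) / (h u - h z), fun y hy => ?_, z, hzT, hzu, ?_⟩
  · rcases eq_or_ne y u with rfl | hyu
    · simp
    have hle := hmin y (mem_erase.2 ⟨hyu, hy⟩)
    rw [le_div_iff₀ (sub_pos.2 (hh y hy hyu))] at hle
    linarith
  · field_simp [(sub_pos.2 (hh z hzT hzu)).ne']
    ring

section Normed

variable {E : Type*} [NormedAddCommGroup E] [NormedSpace ℝ E]

theorem convexHull_filter_eq_of_le (V : Finset E) (f : StrongDual ℝ E) {m : ℝ}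
    (hV : ∀ y ∈ V, m ≤ f y) :
    convexHull ℝ (V.filter (f · = m) : Set E) = {x ∈ convexHull ℝ (V : Set E) | f x = m} := by
  set B := {x ∈ convexHull ℝ (V : Set E) | f x = m}
  have hle : ∀ x ∈ convexHull ℝ (V : Set E), m ≤ f x :=
    convexHull_min hV (convex_halfSpace_ge f.isLinear m)
  have hB : IsExtreme ℝ (convexHull ℝ (V : Set E)) B := isExtreme_setOf_eq_of_le f.toLinearMap hle
  have hBconv : Convex ℝ B := (convex_convexHull ℝ _).inter (convex_hyperplane f.isLinear m)
  have hBcpt : IsCompact B :=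
    (V.finite_toSet.isCompact_convexHull ℝ).inter_right (isClosed_eq f.continuous continuous_const)
  refine (convexHull_min (fun y hy => ?_) hBconv).antisymm ?_
  · rw [coe_filter] at hy
    exact ⟨subset_convexHull ℝ _ hy.1, hy.2⟩
  -- Krein–Milman: `B` is the closed convex hull of its extreme points, which are vertices.
  have hext : B.extremePoints ℝ ⊆ (V.filter (f · = m) : Set E) := fun x hx => by
    rw [coe_filter]
    exact ⟨extremePoints_convexHull_subset (hB.extremePoints_subset_extremePoints hx), hx.1.2⟩
  calc B = closure (convexHull ℝ (B.extremePoints ℝ)) :=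
        (closure_convexHull_extremePoints hBcpt hBconv).symm
    _ ⊆ closure (convexHull ℝ (V.filter (f · = m) : Set E)) := closure_mono (convexHull_mono hext)
    _ = _ := ((V.filter _).finite_toSet.isClosed_convexHull ℝ).closure_eq

theorem isExtreme_convexHull_filter (V : Finset E) (f : StrongDual ℝ E) {m : ℝ}
    (hV : ∀ y ∈ V, m ≤ f y) :
    IsExtreme ℝ (convexHull ℝ (V : Set E)) (convexHull ℝ (V.filter (f · = m) : Set E)) := by
  rw [convexHull_filter_eq_of_le V f hV]
  exact isExtreme_setOf_eq_of_le f.toLinearMap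
    (convexHull_min hV (convex_halfSpace_ge f.isLinear m))

theorem mem_extremePoints_convexHull_of_forall_lt {V : Finset E} {w : E} (hw : w ∈ V)
    (f : StrongDual ℝ E) (hf : ∀ y ∈ V, y ≠ w → f w < f y) :
    w ∈ (convexHull ℝ (V : Set E)).extremePoints ℝ := by
  have hfilter : V.filter (f · = f w) = {w} := by
    ext y
    simp only [mem_filter, Finset.mem_singleton]
    exact ⟨fun ⟨hy, hfy⟩ => by_contra fun hyw => (hf y hy hyw).ne' hfy,
      by rintro rfl; exact ⟨hw, rfl⟩⟩
  have h := isExtreme_convexHull_filter V f fun y hy => by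
    rcases eq_or_ne y w with rfl | hyw
    exacts [le_rfl, (hf y hy hyw).le]
  rwa [hfilter, coe_singleton, convexHull_singleton, isExtreme_singleton] at h

theorem right_mem_extremePoints_segment {u w : E} (h : u ≠ w) :
    w ∈ (segment ℝ u w).extremePoints ℝ := by
  classical
  obtain ⟨f, hf⟩ := geometric_hahn_banach_point_point h.symm
  rw [← convexHull_pair, ← coe_pair]
  refine mem_extremePoints_convexHull_of_forall_lt (by simp) f fun y hy hyw => ?_
  obtain rfl : y = u := by simpa [hyw] using hy
  exact hf

theorem exists_forall_lt_of_mem_extremePoints_convexHull {V : Finset E} {u : E}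
    (hu : u ∈ (convexHull ℝ (V : Set E)).extremePoints ℝ) :
    ∃ h : StrongDual ℝ E, ∀ y ∈ V, y ≠ u → h y < h u := by
  classical
  have hnot : u ∉ convexHull ℝ (V.erase u : Set E) := fun hmem => by
    simpa using extremePoints_convexHull_subset (inter_extremePoints_subset_extremePoints_of_subset
      (convexHull_mono (coe_subset.2 (erase_subset u V))) ⟨hmem, hu⟩)
  obtain ⟨h, c, hc, hcu⟩ := geometric_hahn_banach_closed_point (convex_convexHull ℝ _)
    ((V.erase u).finite_toSet.isClosed_convexHull ℝ) hnot
  exact ⟨h, fun y hy hyu => (hc y (subset_convexHull ℝ _ (by simp [hy, hyu]))).trans hcu⟩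

theorem exists_tilted_face {T : Finset E} {u : E} (hu : u ∈ T) (g h : StrongDual ℝ E)
    (hh : ∀ y ∈ T, y ≠ u → h y < h u) (hne : ∃ y ∈ T, y ≠ u) :
    ∃ r : ℝ, (∀ y ∈ T, g u + r * (h u - h y) ≤ g y) ∧
      ∃ T' ⊆ T, u ∈ T' ∧ (∃ z ∈ T', z ≠ u) ∧
        IsExtreme ℝ (convexHull ℝ (T : Set E)) (convexHull ℝ (T' : Set E)) ∧
        ∀ y ∈ T', g y = g u + r * (h u - h y) := by
  obtain ⟨r, hr, z, hzT, hzu, hz⟩ := exists_supporting_slope g h hh hne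
  set ψ := g + r • h
  have hψ (y : E) : ψ y - ψ u = g y - (g u + r * (h u - h y)) := by
    simp only [ψ, add_apply, smul_apply, smul_eq_mul]
    ring
  refine ⟨r, hr, T.filter (ψ · = ψ u), filter_subset _ _, mem_filter.2 ⟨hu, rfl⟩,
    ⟨z, mem_filter.2 ⟨hzT, by linarith [hψ z]⟩, hzu⟩,
    isExtreme_convexHull_filter T ψ fun y hy => by linarith [hψ y, hr y hy], fun y hy => ?_⟩
  linarith [hψ y, (mem_filter.1 hy).2]

theorem convexHull_eq_segment_of_forall_dual {T : Finset E} {u w : E} (hu : u ∈ T) (hw : w ∈ T)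
    (h : StrongDual ℝ E) (hwu : h w < h u) (hTh : ∀ y ∈ T, h w ≤ h y ∧ h y ≤ h u)
    (hTg : ∀ g : StrongDual ℝ E, ∃ r : ℝ, ∀ y ∈ T, g y = g u + r * (h u - h y)) :
    convexHull ℝ (T : Set E) = segment ℝ u w := by
  refine (convexHull_min (fun y hy => ?_) (convex_segment u w)).antisymm
    (segment_subset_convexHull hu hw)
  -- `y = (1 - t) • u + t • w`, tested against every functional.
  have hpos : 0 < h u - h w := sub_pos.2 hwu
  set t := (h u - h y) / (h u - h w)
  have ht : t * (h u - h w) = h u - h y := div_mul_cancel₀ _ hpos.ne'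
  obtain ⟨hwy, hyu⟩ := hTh y hy
  refine ⟨1 - t, t, ?_, div_nonneg (by linarith) hpos.le, by ring, ?_⟩
  · rw [sub_nonneg, div_le_one hpos]
    linarith
  refine (SeparatingDual.eq_iff_forall_dual_eq (R := ℝ)).2 fun g => ?_
  obtain ⟨r, hr⟩ := hTg g
  simp only [map_add, map_smul, smul_eq_mul, hr y hy, hr w hw]
  linear_combination r * ht

theorem exists_isExtreme_segment {V : Finset E} {u : E} (hu : u ∈ V) (h : StrongDual ℝ E)
    (hh : ∀ y ∈ V, y ≠ u → h y < h u) (hne : ∃ y ∈ V, y ≠ u) :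
    ∃ w ∈ V, w ≠ u ∧ IsExtreme ℝ (convexHull ℝ (V : Set E)) (segment ℝ u w) := by
  classical
  -- A smallest face `T` through `u` containing another vertex is an edge: since no tilt of a
  -- functional by `h` cuts `T` down, every functional is affine in `h` on `T`.
  obtain ⟨T, hT, hTmin⟩ := (V.powerset.filter fun T : Finset E => u ∈ T ∧ (∃ y ∈ T, y ≠ u) ∧
      IsExtreme ℝ (convexHull ℝ (V : Set E)) (convexHull ℝ (T : Set E))).exists_min_image
    Finset.card ⟨V, by simp [hu, hne, IsExtreme.rfl]⟩
  simp only [mem_filter, Finset.mem_powerset] at hT hTmin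
  obtain ⟨hTV, huT, ⟨z, hzT, hzu⟩, hT⟩ := hT
  have hhT : ∀ y ∈ T, y ≠ u → h y < h u := fun y hy => hh y (hTV hy)
  have hTg (g : StrongDual ℝ E) : ∃ r : ℝ, ∀ y ∈ T, g y = g u + r * (h u - h y) := by
    obtain ⟨r, -, T', hT'T, huT', hz', hT', hT'g⟩ := exists_tilted_face huT g h hhT ⟨z, hzT, hzu⟩
    obtain rfl := eq_of_subset_of_card_le hT'T (hTmin T' ⟨hT'T.trans hTV, huT', hz', hT.trans hT'⟩)
    exact ⟨r, hT'g⟩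
  obtain ⟨w, hw, hwmin⟩ := (T.erase u).exists_min_image h ⟨z, mem_erase.2 ⟨hzu, hzT⟩⟩
  obtain ⟨hwu, hwT⟩ := mem_erase.1 hw
  have hTh : ∀ y ∈ T, h w ≤ h y ∧ h y ≤ h u := fun y hy => by
    rcases eq_or_ne y u with rfl | hyu
    · exact ⟨(hhT w hwT hwu).le, le_rfl⟩
    · exact ⟨hwmin y (mem_erase.2 ⟨hyu, hy⟩), (hhT y hy hyu).le⟩
  rw [convexHull_eq_segment_of_forall_dual huT hwT h (hhT w hwT hwu) hTh hTg] at hT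
  exact ⟨w, hTV hwT, hwu, hT⟩

theorem exists_isExtreme_segment_lt {V : Finset E} {u : E}
    (hu : u ∈ (convexHull ℝ (V : Set E)).extremePoints ℝ) (g : StrongDual ℝ E)
    (hg : ∃ y ∈ V, g y < g u) :
    ∃ w ∈ V, w ≠ u ∧ g w < g u ∧ IsExtreme ℝ (convexHull ℝ (V : Set E)) (segment ℝ u w) := by
  obtain ⟨y, hy, hgy⟩ := hg
  have hyu : y ≠ u := by rintro rfl; exact hgy.false
  obtain ⟨h, hh⟩ := exists_forall_lt_of_mem_extremePoints_convexHull hu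
  -- Tilting `g` by `h` isolates a face through `u` on which `g` is smaller than at `u`.
  obtain ⟨r, hr, T, hTV, huT, hT, hTV', hTg⟩ :=
    exists_tilted_face (extremePoints_convexHull_subset hu) g h hh ⟨y, hy, hyu⟩
  have hr0 : r < 0 := by nlinarith [hr y hy, hh y hy hyu]
  obtain ⟨w, hwT, hwu, hw⟩ := exists_isExtreme_segment huT h (fun y hy => hh y (hTV hy)) hT
  refine ⟨w, hTV hwT, hwu, ?_, hTV'.trans hw⟩
  nlinarith [hTg w hwT, hh w (hTV hwT) hwu]

end Normed

theorem SimpleGraph.dist_le_length_add_dist_add_length {V : Type*} {G : SimpleGraph V}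
    {u u' v v' : V} (p : G.Walk u u') (q : G.Walk v v') (h : G.Reachable u' v') :
    G.dist u v ≤ p.length + G.dist u' v' + q.length := by
  obtain ⟨w, hw⟩ := h.exists_walk_length_eq_dist
  have := G.dist_le (p.append (w.append q.reverse))
  simp only [SimpleGraph.Walk.length_append, SimpleGraph.Walk.length_reverse, hw] at this
  omega

section PolytopeGraph

variable {d : ℕ}

theorem polytopeGraph_mono_of_isExtreme {P F : Set (Fin d → ℝ)} (hPF : IsExtreme ℝ P F) :
    polytopeGraph F ≤ polytopeGraph P := fun _ _ ⟨hab, ha, hb, hF⟩ =>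
  ⟨hab, hPF.extremePoints_subset_extremePoints ha, hPF.extremePoints_subset_extremePoints hb,
    hPF.trans hF⟩

theorem polytopeGraph_adj_of_adj_image {m : ℕ} {F : Set (Fin d → ℝ)}
    (π : (Fin d → ℝ) →ₗ[ℝ] (Fin m → ℝ)) (hF : Convex ℝ F) (hπ : InjOn π F) {a b : Fin d → ℝ}
    (ha : a ∈ F) (hb : b ∈ F) (hab : (polytopeGraph (π '' F)).Adj (π a) (π b)) :
    (polytopeGraph F).Adj a b := by
  obtain ⟨hne, ha', hb', hseg⟩ := hab
  have himage : π '' segment ℝ a b = segment ℝ (π a) (π b) := by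
    simpa using image_segment ℝ π.toAffineMap a b
  rw [← himage, isExtreme_image_iff π hF hπ (hF.segment_subset ha hb)] at hseg
  exact ⟨fun h => hne (congrArg π h), (image_mem_extremePoints_image_iff π hF hπ ha).1 ha',
    (image_mem_extremePoints_image_iff π hF hπ hb).1 hb', hseg⟩

theorem dist_le_dist_image {m : ℕ} {P F : Set (Fin d → ℝ)} (hPF : IsExtreme ℝ P F)
    (hF : Convex ℝ F) (π : (Fin d → ℝ) →ₗ[ℝ] (Fin m → ℝ)) (hπ : InjOn π F) {a b : Fin d → ℝ}
    (ha : a ∈ F) (hb : b ∈ F) (hr : (polytopeGraph (π '' F)).Reachable (π a) (π b)) :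
    (polytopeGraph P).dist a b ≤ (polytopeGraph (π '' F)).dist (π a) (π b) := by
  have hinv {q} (hq : q ∈ π '' F) : Function.invFunOn π F q ∈ F ∧ π (Function.invFunOn π F q) = q :=
    ⟨Function.invFunOn_mem hq, Function.invFunOn_eq hq⟩
  let lift : polytopeGraph (π '' F) →g polytopeGraph P :=
    ⟨Function.invFunOn π F, fun {q₁ q₂} hq => by
      obtain ⟨h₁F, h₁⟩ := hinv hq.2.1.1
      obtain ⟨h₂F, h₂⟩ := hinv hq.2.2.1.1
      rw [← h₁, ← h₂] at hq
      exact polytopeGraph_mono_of_isExtreme hPF (polytopeGraph_adj_of_adj_image π hF hπ h₁F h₂F hq)⟩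
  obtain ⟨p, hp⟩ := hr.exists_walk_length_eq_dist
  have := (polytopeGraph P).dist_le ((p.map lift).copy (hπ.leftInvOn_invFunOn ha)
    (hπ.leftInvOn_invFunOn hb))
  rwa [SimpleGraph.Walk.length_copy, SimpleGraph.Walk.length_map, hp] at this

theorem exists_adj_lt {V : Finset (Fin d → ℝ)} {u : Fin d → ℝ}
    (hu : u ∈ (convexHull ℝ (V : Set (Fin d → ℝ))).extremePoints ℝ)
    (g : StrongDual ℝ (Fin d → ℝ)) (hg : ∃ y ∈ V, g y < g u) :
    ∃ w ∈ V, (polytopeGraph (convexHull ℝ (V : Set (Fin d → ℝ)))).Adj u w ∧ g w < g u := by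
  obtain ⟨w, hwV, hwu, hgw, hseg⟩ := exists_isExtreme_segment_lt hu g hg
  exact ⟨w, hwV, ⟨hwu.symm, hu, hseg.extremePoints_subset_extremePoints
    (right_mem_extremePoints_segment hwu.symm), hseg⟩, hgw⟩

theorem exists_walk_to_min {V : Finset (Fin d → ℝ)} (f : StrongDual ℝ (Fin d → ℝ))
    (μ : (Fin d → ℝ) → ℕ) (hμ : ∀ x ∈ V, ∀ y ∈ V, f y < f x → μ y < μ x) {x : Fin d → ℝ}
    (hx : x ∈ (convexHull ℝ (V : Set (Fin d → ℝ))).extremePoints ℝ) :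
    ∃ x' ∈ (convexHull ℝ (V : Set (Fin d → ℝ))).extremePoints ℝ, (∀ y ∈ V, f x' ≤ f y) ∧
      ∃ p : (polytopeGraph (convexHull ℝ (V : Set (Fin d → ℝ)))).Walk x x',
        p.length + μ x' ≤ μ x := by
  induction hn : μ x using Nat.strong_induction_on generalizing x with
  | _ n ih =>
  by_cases hmin : ∀ y ∈ V, f x ≤ f y
  · exact ⟨x, hx, hmin, .nil, by simp [hn]⟩
  push Not at hmin
  obtain ⟨w, hwV, hadj, hfw⟩ := exists_adj_lt hx f hmin
  obtain ⟨x', hx', hx'min, p, hp⟩ :=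
    ih (μ w) (hn ▸ hμ x (extremePoints_convexHull_subset hx) w hwV hfw) hadj.2.2.1 rfl
  exact ⟨x', hx', hx'min, .cons hadj p, by
    have := hμ x (extremePoints_convexHull_subset hx) w hwV hfw
    simp only [SimpleGraph.Walk.length_cons]
    omega⟩

theorem exists_walk_to_min_of_natCast {V : Finset (Fin d → ℝ)}
    (f : StrongDual ℝ (Fin d → ℝ)) (hf : ∀ y ∈ V, ∃ n : ℕ, f y = n) {x : Fin d → ℝ}
    (hx : x ∈ (convexHull ℝ (V : Set (Fin d → ℝ))).extremePoints ℝ) :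
    ∃ x' ∈ (convexHull ℝ (V : Set (Fin d → ℝ))).extremePoints ℝ, (∀ y ∈ V, f x' ≤ f y) ∧
      ∃ p : (polytopeGraph (convexHull ℝ (V : Set (Fin d → ℝ)))).Walk x x',
        (p.length : ℝ) ≤ f x - f x' := by
  have hfloor : ∀ y ∈ V, (⌊f y⌋₊ : ℝ) = f y := fun y hy => by
    obtain ⟨n, hn⟩ := hf y hy
    rw [hn, Nat.floor_natCast]
  obtain ⟨x', hx', hmin, p, hp⟩ := exists_walk_to_min f (fun y => ⌊f y⌋₊)
    (fun y hy z hz h => by rw [← hfloor y hy, ← hfloor z hz] at h; exact_mod_cast h) hx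
  refine ⟨x', hx', hmin, p, ?_⟩
  have hp' := (Nat.cast_le (α := ℝ)).2 hp
  push_cast at hp'
  rw [hfloor x (extremePoints_convexHull_subset hx),
    hfloor x' (extremePoints_convexHull_subset hx')] at hp'
  linarith

theorem exists_walk_length_le_card {V : Finset (Fin d → ℝ)} {u v : Fin d → ℝ}
    (hu : u ∈ (convexHull ℝ (V : Set (Fin d → ℝ))).extremePoints ℝ)
    (hv : v ∈ (convexHull ℝ (V : Set (Fin d → ℝ))).extremePoints ℝ) :
    ∃ p : (polytopeGraph (convexHull ℝ (V : Set (Fin d → ℝ)))).Walk u v, p.length ≤ V.card := by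
  obtain ⟨h, hh⟩ := exists_forall_lt_of_mem_extremePoints_convexHull hv
  -- Climb `h`, measuring progress by the number of vertices still above.
  obtain ⟨x, hxext, hx, p, hp⟩ := exists_walk_to_min (-h) (fun x => (V.filter (h x < h ·)).card)
    (fun x _ y hy hxy => card_lt_card <| by
      simp only [neg_apply, neg_lt_neg_iff] at hxy
      refine (Finset.ssubset_iff_of_subset fun z hz => ?_).2 ⟨y, by simp [hy, hxy]⟩
      rw [mem_filter] at hz ⊢
      exact ⟨hz.1, hxy.trans hz.2⟩) hu
  obtain rfl : x = v := by
    by_contra hxv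
    have := hx v (extremePoints_convexHull_subset hv)
    simp only [neg_apply, neg_le_neg_iff] at this
    exact (hh x (extremePoints_convexHull_subset hxext) hxv).not_ge this
  exact ⟨p, by linarith [card_filter_le V (h u < h ·)]⟩

theorem reachable_of_mem_extremePoints_convexHull {V : Finset (Fin d → ℝ)} {u v : Fin d → ℝ}
    (hu : u ∈ (convexHull ℝ (V : Set (Fin d → ℝ))).extremePoints ℝ)
    (hv : v ∈ (convexHull ℝ (V : Set (Fin d → ℝ))).extremePoints ℝ) :
    (polytopeGraph (convexHull ℝ (V : Set (Fin d → ℝ)))).Reachable u v :=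
  (exists_walk_length_le_card hu hv).elim fun p _ => ⟨p⟩

end PolytopeGraph

section Lattice

variable {d k : ℕ}

theorem card_le_pow_of_coords_le {V : Finset (Fin d → ℝ)}
    (hV : ∀ v ∈ V, ∀ i, ∃ n : ℕ, n ≤ k ∧ v i = n) : V.card ≤ (k + 1) ^ d := by
  calc V.card ≤ (Fintype.piFinset fun _ : Fin d => (range (k + 1)).image (Nat.cast : ℕ → ℝ)).card :=
        card_le_card fun v hv => Fintype.mem_piFinset.2 fun i => by
          obtain ⟨n, hn, hvi⟩ := hV v hv i
          exact mem_image.2 ⟨n, mem_range.2 (Nat.lt_succ_of_le hn), hvi.symm⟩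
    _ ≤ (k + 1) ^ d := by
      rw [Fintype.card_piFinset_const]
      exact Nat.pow_le_pow_left (card_image_le.trans (card_range _).le) d

theorem IsLatticePolytope.dist_le {P : Set (Fin d → ℝ)} (hP : IsLatticePolytope d k P)
    {u v : Fin d → ℝ} (hu : u ∈ P.extremePoints ℝ) (hv : v ∈ P.extremePoints ℝ) :
    (polytopeGraph P).dist u v ≤ (k + 1) ^ d := by
  obtain ⟨V, hV, rfl⟩ := hP
  obtain ⟨p, hp⟩ := exists_walk_length_le_card hu hv
  exact ((polytopeGraph _).dist_le p).trans (hp.trans (card_le_pow_of_coords_le hV))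

theorem IsLatticePolytope.dist_le_latticeDiam {P : Set (Fin d → ℝ)}
    (hP : IsLatticePolytope d k P) {u v : Fin d → ℝ} (hu : u ∈ P.extremePoints ℝ)
    (hv : v ∈ P.extremePoints ℝ) : (polytopeGraph P).dist u v ≤ latticeDiam d k := by
  have hdiam {Q : Set (Fin d → ℝ)} (hQ : IsLatticePolytope d k Q) : polyDiam Q ≤ (k + 1) ^ d :=
    csSup_le' fun _ ⟨a, ha, b, hb, hab⟩ => hab ▸ hQ.dist_le ha hb
  calc (polytopeGraph P).dist u v ≤ polyDiam P :=
        le_csSup ⟨_, fun _ ⟨a, ha, b, hb, hab⟩ => hab ▸ hP.dist_le ha hb⟩ ⟨u, hu, v, hv, rfl⟩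
    _ ≤ latticeDiam d k := le_csSup ⟨_, fun _ ⟨Q, hQ, hn⟩ => hn ▸ hdiam hQ⟩ ⟨P, hP, rfl⟩

end Lattice

section Projection

def coordSum {ι : Type*} [Fintype ι] (I : Finset ι) : StrongDual ℝ (ι → ℝ) :=
  ∑ i ∈ I, ContinuousLinearMap.proj i

@[simp]
theorem coordSum_apply {ι : Type*} [Fintype ι] (I : Finset ι) (x : ι → ℝ) :
    coordSum I x = ∑ i ∈ I, x i := by
  simp [coordSum]

variable {m k : ℕ}

theorem sum_eq_add_sum_succAbove {M : Type*} [AddCommMonoid M] (x : Fin (m + 1) → M)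
    {I : Finset (Fin (m + 1))} {j : Fin (m + 1)} (hj : j ∈ I) :
    ∑ i ∈ I, x i = x j + ∑ i ∈ univ.filter (j.succAbove · ∈ I), x (j.succAbove i) := by
  calc ∑ i ∈ I, x i = ∑ i, if i ∈ I then x i else 0 := by rw [sum_ite_mem, Finset.univ_inter]
    _ = _ := by rw [Fin.sum_univ_succAbove _ j, if_pos hj, sum_filter]

theorem card_filter_succAbove_add_one {I : Finset (Fin (m + 1))} {j : Fin (m + 1)} (hj : j ∈ I) :
    (univ.filter (j.succAbove · ∈ I)).card + 1 = I.card := by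
  simpa [add_comm] using (sum_eq_add_sum_succAbove (fun _ => (1 : ℕ)) hj).symm

theorem injOn_funLeft_succAbove {I : Finset (Fin (m + 1))} {j : Fin (m + 1)} (hj : j ∈ I)
    (c : ℝ) : InjOn (LinearMap.funLeft ℝ ℝ j.succAbove) {x | ∑ i ∈ I, x i = c} := by
  intro x hx y hy hxy
  have hoff : ∀ i, x (j.succAbove i) = y (j.succAbove i) := congrFun hxy
  have hx' := sum_eq_add_sum_succAbove x hj
  have hy' := sum_eq_add_sum_succAbove y hj
  simp only [hoff, mem_ofPred_eq] at hx hy hx'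
  have hj' : x j = y j := by linarith
  exact funext <| (Fin.forall_iff_succAbove (P := fun i => x i = y i) j).2 ⟨hj', hoff⟩

theorem exists_latticePolytope_projection {V : Finset (Fin (m + 1) → ℝ)}
    (hV : ∀ v ∈ V, ∀ i, ∃ n : ℕ, n ≤ k ∧ v i = n) {I : Finset (Fin (m + 1))} {j : Fin (m + 1)}
    (hj : j ∈ I) {a b : Fin (m + 1) → ℝ}
    (ha : a ∈ (convexHull ℝ (V : Set (Fin (m + 1) → ℝ))).extremePoints ℝ)
    (hb : b ∈ (convexHull ℝ (V : Set (Fin (m + 1) → ℝ))).extremePoints ℝ)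
    (hamin : ∀ y ∈ V, coordSum I a ≤ coordSum I y) (hba : coordSum I b = coordSum I a) :
    ∃ Q : Set (Fin m → ℝ), IsLatticePolytope m k Q ∧ a ∘ j.succAbove ∈ Q.extremePoints ℝ ∧
      b ∘ j.succAbove ∈ Q.extremePoints ℝ ∧
      (polytopeGraph (convexHull ℝ (V : Set (Fin (m + 1) → ℝ)))).dist a b ≤
        (polytopeGraph Q).dist (a ∘ j.succAbove) (b ∘ j.succAbove) := by
  set T := V.filter (coordSum I · = coordSum I a)
  have hF := isExtreme_convexHull_filter V _ hamin
  have hFeq := convexHull_filter_eq_of_le V _ hamin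
  set π := LinearMap.funLeft ℝ ℝ (j.succAbove : Fin m → Fin (m + 1))
  have hπ : InjOn π (convexHull ℝ (T : Set (Fin (m + 1) → ℝ))) :=
    (injOn_funLeft_succAbove hj (coordSum I a)).mono fun x hx => by
      rw [hFeq] at hx
      simpa only [mem_ofPred_eq, coordSum_apply] using hx.2
  have haF : a ∈ convexHull ℝ (T : Set (Fin (m + 1) → ℝ)) := hFeq ▸ ⟨ha.1, rfl⟩
  have hbF : b ∈ convexHull ℝ (T : Set (Fin (m + 1) → ℝ)) := hFeq ▸ ⟨hb.1, hba⟩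
  have hext {x} (hxF : x ∈ convexHull ℝ (T : Set (Fin (m + 1) → ℝ)))
      (hx : x ∈ (convexHull ℝ (V : Set (Fin (m + 1) → ℝ))).extremePoints ℝ) :
      π x ∈ (π '' convexHull ℝ (T : Set (Fin (m + 1) → ℝ))).extremePoints ℝ :=
    (image_mem_extremePoints_image_iff π (convex_convexHull ℝ _) hπ hxF).2
      (inter_extremePoints_subset_extremePoints_of_subset hF.1 ⟨hxF, hx⟩)
  have hQ : π '' convexHull ℝ (T : Set (Fin (m + 1) → ℝ)) =
      convexHull ℝ ((T.image π : Finset (Fin m → ℝ)) : Set (Fin m → ℝ)) := by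
    rw [coe_image, π.image_convexHull]
  have hQlat : IsLatticePolytope m k (π '' convexHull ℝ (T : Set (Fin (m + 1) → ℝ))) :=
    ⟨T.image π, fun q hq i => by
      obtain ⟨y, hy, rfl⟩ := mem_image.1 hq
      exact hV y (mem_filter.1 hy).1 _, hQ⟩
  have hr : (polytopeGraph (π '' convexHull ℝ (T : Set (Fin (m + 1) → ℝ)))).Reachable
      (π a) (π b) := by
    have hpa := hext haF ha
    have hpb := hext hbF hb
    rw [hQ] at hpa hpb ⊢
    exact reachable_of_mem_extremePoints_convexHull hpa hpb
  exact ⟨_, hQlat, hext haF ha, hext hbF hb,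
    dist_le_dist_image hF (convex_convexHull ℝ _) π hπ haF hbF hr⟩

theorem exists_projection_dist_le {P : Set (Fin (m + 1) → ℝ)}
    (hP : IsLatticePolytope (m + 1) k P) {u v : Fin (m + 1) → ℝ} (hu : u ∈ P.extremePoints ℝ)
    (hv : v ∈ P.extremePoints ℝ) {I : Finset (Fin (m + 1))} {j : Fin (m + 1)} (hj : j ∈ I) :
    ∃ Q : Set (Fin m → ℝ), IsLatticePolytope m k Q ∧
      ∃ a ∈ Q.extremePoints ℝ, ∃ b ∈ Q.extremePoints ℝ,
        ((polytopeGraph P).dist u v : ℝ) + ∑ i ∈ univ.filter (j.succAbove · ∈ I), (a i + b i) ≤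
          (polytopeGraph Q).dist a b + ∑ i ∈ I, (u i + v i) := by
  obtain ⟨V, hV, rfl⟩ := hP
  set φ := coordSum I
  have hφ (x : Fin (m + 1) → ℝ) : φ x = ∑ i ∈ I, x i := coordSum_apply I x
  have hφV : ∀ y ∈ V, ∃ n : ℕ, φ y = n := fun y hy => by
    choose n _ hn using hV y hy
    exact ⟨∑ i ∈ I, n i, by simp [hφ, hn]⟩
  obtain ⟨u', hu', hu'min, pu, hpu⟩ := exists_walk_to_min_of_natCast φ hφV hu
  obtain ⟨v', hv', hv'min, pv, hpv⟩ := exists_walk_to_min_of_natCast φ hφV hv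
  have hu'V := extremePoints_convexHull_subset hu'
  have hv'V := extremePoints_convexHull_subset hv'
  have hφv' : φ v' = φ u' := le_antisymm (hv'min u' hu'V) (hu'min v' hv'V)
  obtain ⟨Q, hQ, ha, hb, hdist⟩ := exists_latticePolytope_projection hV hj hu' hv' hu'min hφv'
  refine ⟨Q, hQ, _, ha, _, hb, ?_⟩
  have htri := SimpleGraph.dist_le_length_add_dist_add_length pu pv
    (reachable_of_mem_extremePoints_convexHull hu' hv')
  have hsum : ∑ i ∈ univ.filter (j.succAbove · ∈ I), ((u' ∘ j.succAbove) i + (v' ∘ j.succAbove) i)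
      = φ u' - u' j + (φ v' - v' j) := by
    simp only [Function.comp_apply, sum_add_distrib, hφ, sum_eq_add_sum_succAbove _ hj]
    ring
  obtain ⟨nu, -, hnu⟩ := hV u' hu'V j
  obtain ⟨nv, -, hnv⟩ := hV v' hv'V j
  have hu'j : 0 ≤ u' j := hnu ▸ Nat.cast_nonneg nu
  have hv'j : 0 ≤ v' j := hnv ▸ Nat.cast_nonneg nv
  have huv : ∑ i ∈ I, (u i + v i) = φ u + φ v := by simp only [hφ, sum_add_distrib]
  have htri' := (Nat.cast_le (α := ℝ)).2 htri
  have hdist' := (Nat.cast_le (α := ℝ)).2 hdist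
  push_cast at htri'
  linarith

end Projection

theorem dist_le_of_small_sum_general (d k : ℕ) (P : Set (Fin d → ℝ)) (hP : IsLatticePolytope d k P)
    (u v : Fin d → ℝ) (hu : u ∈ P.extremePoints ℝ) (hv : v ∈ P.extremePoints ℝ)
    (I : Finset (Fin d)) :
    ((polytopeGraph P).dist u v : ℝ) ≤
      (latticeDiam (d - I.card) k : ℝ) + ∑ i ∈ I, (u i + v i) := by
  obtain ⟨c, hc⟩ : ∃ c, I.card = c := ⟨_, rfl⟩
  induction c generalizing d P u v I with
  | zero =>
    obtain rfl := card_eq_zero.1 hc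
    simpa using hP.dist_le_latticeDiam hu hv
  | succ c ih =>
    obtain ⟨j, hj⟩ := card_pos.1 (hc.symm ▸ c.succ_pos : 0 < I.card)
    cases d with
    | zero => exact j.elim0
    | succ m =>
      obtain ⟨Q, hQ, a, ha, b, hb, hstep⟩ := exists_projection_dist_le hP hu hv hj
      have hcard : (univ.filter (j.succAbove · ∈ I)).card = c := by
        have := card_filter_succAbove_add_one hj
        omega
      have hQab := ih m Q hQ a b ha hb _ hcard
      rw [hcard] at hQab
      rw [hc, Nat.add_sub_add_right]
      linarith

/-- If `u`, `v` are vertices of a lattice `(d,k)`-polytope `P` and `I` is a set of at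
most `3` coordinate indices with `u i + v i ≤ k` for every `i ∈ I`, then
`d(u,v) ≤ δ(d−|I|,k) + ∑_{i ∈ I} (u i + v i)`. -/
theorem dist_le_of_small_sum (d k : ℕ) (P : Set (Fin d → ℝ)) (hP : IsLatticePolytope d k P)
    (u v : Fin d → ℝ) (hu : u ∈ P.extremePoints ℝ) (hv : v ∈ P.extremePoints ℝ)
    (I : Finset (Fin d)) (hI : I.card ≤ 3)
    (hsum : ∀ i ∈ I, u i + v i ≤ (k : ℝ)) :
    ((polytopeGraph P).dist u v : ℝ) ≤
      (latticeDiam (d - I.card) k : ℝ) + ∑ i ∈ I, (u i + v i) :=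
  dist_le_of_small_sum_general d k P hP u v hu hv I
end

section
/- Let P be a lattice (d,k)-polytope, let j ∈ {1,…,d}, let l_j = min{x_j : x ∈ P}, and let F = P ∩ {x ∈ ℝ^d : x_j = l_j}. Then every vertex x of P satisfies d(x,F) ≤ x_j − l_j. -/
open scoped BigOperators

/-!
Choose a linear `g` with `g (v - x) > 0` for every other vertex `v` (Hahn–Banach, since `x` is a
vertex). If some point of `P` has a smaller `f`-value than `x`, then so does an extreme point `b`
of the section `{g = 1}` of the cone at `x` (Krein–Milman), and the points of `P` on the ray
`x + ℝ≥0 • b` form an edge of `P` along which `f` decreases. For `f = (· j)`, every vertex outside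
`F` thus has a neighbour whose `j`-th coordinate is smaller, hence smaller by at least `1` since
vertex coordinates are integers; so at most `x j - l` steps lead from `x` into `F`.
-/

open Set

section ExtremeSets

variable {𝕜 E ι : Type*} [Field 𝕜] [LinearOrder 𝕜] [IsStrictOrderedRing 𝕜]
  [AddCommGroup E] [Module 𝕜 E]

theorem right_mem_extremePoints_segment_s15 {x y : E} (hxy : x ≠ y) :
    y ∈ (segment 𝕜 x y).extremePoints 𝕜 := by
  refine mem_extremePoints_iff_left.2 ⟨right_mem_segment 𝕜 x y, ?_⟩
  rw [segment_eq_image']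
  rintro _ ⟨s₁, ⟨-, hs₁⟩, rfl⟩ _ ⟨s₂, ⟨-, hs₂⟩, rfl⟩ ⟨a, b, ha, hb, hab, h⟩
  have hcomb : (a * s₁ + b * s₂ - 1) • (y - x) = 0 := by
    linear_combination (norm := module) h - hab • x
  have hs : a * s₁ + b * s₂ = 1 :=
    sub_eq_zero.1 ((smul_eq_zero.1 hcomb).resolve_right (sub_ne_zero.2 hxy.symm))
  have : s₁ = 1 := by nlinarith
  simp [this]

theorem IsExtreme.mem_of_sum_smul_mem {A B : Set E} (hAB : IsExtreme 𝕜 A B) (hA : Convex 𝕜 A)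
    {s : Finset ι} {w : ι → 𝕜} {z : ι → E} (hw₀ : ∀ i ∈ s, 0 ≤ w i) (hw₁ : ∑ i ∈ s, w i = 1)
    (hz : ∀ i ∈ s, z i ∈ A) (hB : ∑ i ∈ s, w i • z i ∈ B) {i : ι} (hi : i ∈ s)
    (hwi : w i ≠ 0) : z i ∈ B := by
  classical
  set r := ∑ j ∈ s.erase i, w j
  have hr : w i + r = 1 := by rw [Finset.add_sum_erase s w hi, hw₁]
  have hsplit : ∑ j ∈ s, w j • z j = w i • z i + ∑ j ∈ s.erase i, w j • z j :=
    (Finset.add_sum_erase s _ hi).symm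
  rcases (Finset.sum_nonneg fun j hj ↦ hw₀ j (Finset.mem_of_mem_erase hj) : 0 ≤ r).eq_or_lt
    with hr0 | hrpos
  · have hrest : ∀ j ∈ s.erase i, w j = 0 :=
      (Finset.sum_eq_zero_iff_of_nonneg fun j hj ↦ hw₀ j (Finset.mem_of_mem_erase hj)).1 hr0.symm
    rwa [hsplit, Finset.sum_eq_zero fun j hj ↦ by rw [hrest j hj, zero_smul], add_zero,
      show w i = 1 by linarith, one_smul] at hB
  · have hq : (s.erase i).centerMass w z ∈ A :=
      hA.centerMass_mem (fun j hj ↦ hw₀ j (Finset.mem_of_mem_erase hj)) hrpos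
        fun j hj ↦ hz j (Finset.mem_of_mem_erase hj)
    refine hAB.left_mem_of_mem_openSegment (hz i hi) hq hB
      ⟨w i, r, (hw₀ i hi).lt_of_ne' hwi, hrpos, hr, ?_⟩
    rw [Finset.centerMass, smul_smul, mul_inv_cancel₀ hrpos.ne', one_smul, hsplit]

theorem IsExtreme.subset_convexHull_inter {V : Finset E} {B : Set E}
    (hB : IsExtreme 𝕜 (convexHull 𝕜 (V : Set E)) B) : B ⊆ convexHull 𝕜 (↑V ∩ B) := by
  classical
  intro p hp
  obtain ⟨w, hw₀, hw₁, hwp⟩ := Finset.mem_convexHull'.1 (hB.1 hp)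
  have hsupp : ∀ v ∈ V, w v ≠ 0 → v ∈ B := fun v hv hwv ↦
    hB.mem_of_sum_smul_mem (convex_convexHull 𝕜 _) hw₀ hw₁ (fun u hu ↦ subset_convexHull 𝕜 _ hu)
      (hwp ▸ hp) hv hwv
  have hsum : ∑ v ∈ V with v ∈ B, w v • v = p :=
    hwp ▸ Finset.sum_filter_of_ne fun v hv h ↦ hsupp v hv (left_ne_zero_of_smul h)
  have hsum₁ : ∑ v ∈ V with v ∈ B, w v = 1 := hw₁ ▸ Finset.sum_filter_of_ne (hsupp · ·)
  rw [← hsum]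
  exact (convex_convexHull 𝕜 _).sum_mem (fun v hv ↦ hw₀ v (Finset.mem_filter.1 hv).1) hsum₁
    fun v hv ↦ subset_convexHull 𝕜 _ (Finset.mem_filter.1 hv)

end ExtremeSets

section VertexFigure

variable {𝕜 E : Type*} [Field 𝕜] [PartialOrder 𝕜] [AddCommGroup E] [Module 𝕜 E]
  {V : Finset E} {x : E} {g : E →ₗ[𝕜] 𝕜}

/-- The section `{g = 1}` of the cone spanned by the directions `v - x`, `v ∈ V`; for `g` positive
on these directions, a copy of the vertex figure of `convexHull V` at `x`. -/
def vertexFigure (V : Finset E) (x : E) (g : E →ₗ[𝕜] 𝕜) : Set E :=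
  convexHull 𝕜 ((fun v ↦ (g (v - x))⁻¹ • (v - x)) '' (↑V \ {x}))

theorem map_eq_one_of_mem_vertexFigure (hg : ∀ v ∈ V, v ≠ x → g (v - x) ≠ 0) {c : E}
    (hc : c ∈ vertexFigure V x g) : g c = 1 := by
  refine convexHull_min ?_ ((convex_singleton (1 : 𝕜)).linear_preimage g) hc
  rintro _ ⟨v, ⟨hv, hvx⟩, rfl⟩
  rw [Set.mem_preimage, map_smul, smul_eq_mul, inv_mul_cancel₀ (hg v hv hvx)]
  rfl

end VertexFigure

section Ray

variable {𝕜 E : Type*} [Field 𝕜] [LinearOrder 𝕜] [IsStrictOrderedRing 𝕜]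
  [AddCommGroup E] [Module 𝕜 E] {V : Finset E} {x b : E} {g : E →ₗ[𝕜] 𝕜}

theorem eq_or_inv_smul_sub_mem_vertexFigure (hg : ∀ v ∈ V, v ≠ x → 0 < g (v - x)) {p : E}
    (hp : p ∈ convexHull 𝕜 (V : Set E)) :
    p = x ∨ 0 < g (p - x) ∧ (g (p - x))⁻¹ • (p - x) ∈ vertexFigure V x g := by
  classical
  obtain ⟨w, hw₀, hw₁, rfl⟩ := Finset.mem_convexHull'.1 hp
  have hdir : ∑ v ∈ V, w v • v - x = ∑ v ∈ V.erase x, w v • (v - x) := by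
    rw [Finset.sum_erase _ (by simp)]
    simp [smul_sub, Finset.sum_sub_distrib, ← Finset.sum_smul, hw₁]
  have hweight : ∀ v ∈ V.erase x, 0 ≤ w v * g (v - x) := fun v hv ↦
    mul_nonneg (hw₀ v (Finset.mem_of_mem_erase hv))
      (hg v (Finset.mem_of_mem_erase hv) (Finset.ne_of_mem_erase hv)).le
  have hgdir : g (∑ v ∈ V, w v • v - x) = ∑ v ∈ V.erase x, w v * g (v - x) := by
    simp [hdir]
  rcases (Finset.sum_nonneg hweight).eq_or_lt with h0 | hpos
  · left
    have hw0 : ∀ v ∈ V.erase x, w v = 0 := fun v hv ↦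
      (mul_eq_zero.1 ((Finset.sum_eq_zero_iff_of_nonneg hweight).1 h0.symm v hv)).resolve_right
        (hg v (Finset.mem_of_mem_erase hv) (Finset.ne_of_mem_erase hv)).ne'
    rw [← sub_eq_zero, hdir]
    exact Finset.sum_eq_zero fun v hv ↦ by rw [hw0 v hv, zero_smul]
  · right
    refine ⟨hgdir ▸ hpos, ?_⟩
    have hmem : (V.erase x).centerMass (fun v ↦ w v * g (v - x))
        (fun v ↦ (g (v - x))⁻¹ • (v - x)) ∈ vertexFigure V x g :=
      (V.erase x).centerMass_mem_convexHull hweight hpos fun v hv ↦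
        ⟨v, ⟨Finset.mem_of_mem_erase hv, Finset.ne_of_mem_erase hv⟩, rfl⟩
    convert hmem using 1
    rw [Finset.centerMass, hgdir, hdir]
    congr 1
    refine Finset.sum_congr rfl fun v hv ↦ ?_
    rw [smul_smul, mul_assoc,
      mul_inv_cancel₀ (hg v (Finset.mem_of_mem_erase hv) (Finset.ne_of_mem_erase hv)).ne', mul_one]

theorem isExtreme_inter_ray (hg : ∀ v ∈ V, v ≠ x → 0 < g (v - x))
    (hb : b ∈ (vertexFigure V x g).extremePoints 𝕜) :
    IsExtreme 𝕜 (convexHull 𝕜 (V : Set E))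
      {p ∈ convexHull 𝕜 (V : Set E) | ∃ s : 𝕜, 0 ≤ s ∧ p = x + s • b} := by
  have hg' : ∀ v ∈ V, v ≠ x → g (v - x) ≠ 0 := fun v hv hvx ↦ (hg v hv hvx).ne'
  refine ⟨sep_subset _ _, ?_⟩
  rintro p hp q hq _ ⟨-, t, ht, rfl⟩ ⟨a, a', ha, ha', haa, hz⟩
  refine ⟨hp, ?_⟩
  rcases eq_or_inv_smul_sub_mem_vertexFigure hg hp with rfl | ⟨hgp, hcp⟩
  · exact ⟨0, le_rfl, by simp⟩
  rcases eq_or_inv_smul_sub_mem_vertexFigure hg hq with hqx | ⟨hgq, hcq⟩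
  · refine ⟨a⁻¹ * t, mul_nonneg (inv_nonneg.2 ha.le) ht, ?_⟩
    have : a • (p - x) = t • b := by linear_combination (norm := module) hz - haa • x - a' • hqx
    rw [mul_smul, ← this, inv_smul_smul₀ ha.ne']
    abel
  -- `p - x` and `q - x` are positive multiples of points `cp`, `cq` of the vertex figure, and `b`
  -- lies in `openSegment cp cq`.
  set cp := (g (p - x))⁻¹ • (p - x)
  set cq := (g (q - x))⁻¹ • (q - x)
  have hp' : p - x = g (p - x) • cp := (smul_inv_smul₀ hgp.ne' _).symm
  have hq' : q - x = g (q - x) • cq := (smul_inv_smul₀ hgq.ne' _).symm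
  have hdir : t • b = (a * g (p - x)) • cp + (a' * g (q - x)) • cq := by
    rw [mul_smul, mul_smul, ← hp', ← hq']
    linear_combination (norm := module) -hz + haa • x
  have ht : t = a * g (p - x) + a' * g (q - x) := by
    simpa [map_eq_one_of_mem_vertexFigure hg' hb.1, map_eq_one_of_mem_vertexFigure hg' hcp,
      map_eq_one_of_mem_vertexFigure hg' hcq] using congrArg g hdir
  have htpos : 0 < t := ht ▸ by positivity
  have hcpb : cp = b := by
    refine hb.2 hcp hcq ⟨a * g (p - x) / t, a' * g (q - x) / t, by positivity, by positivity,
      by rw [← add_div, ← ht, div_self htpos.ne'], ?_⟩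
    rw [div_eq_inv_mul, div_eq_inv_mul, mul_smul t⁻¹, mul_smul t⁻¹, ← smul_add, ← hdir,
      inv_smul_smul₀ htpos.ne']
  refine ⟨g (p - x), hgp.le, ?_⟩
  rw [← hcpb, ← hp']
  abel

theorem exists_inter_ray_eq_segment (hg : ∀ v ∈ V, v ≠ x → 0 < g (v - x))
    (hx : x ∈ convexHull 𝕜 (V : Set E)) (hb : b ∈ (vertexFigure V x g).extremePoints 𝕜) :
    ∃ t : 𝕜, 0 < t ∧ {p ∈ convexHull 𝕜 (V : Set E) | ∃ s : 𝕜, 0 ≤ s ∧ p = x + s • b} =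
      segment 𝕜 x (x + t • b) := by
  classical
  set L := {p ∈ convexHull 𝕜 (V : Set E) | ∃ s : 𝕜, 0 ≤ s ∧ p = x + s • b}
  have hgb : g b = 1 := map_eq_one_of_mem_vertexFigure (fun v hv hvx ↦ (hg v hv hvx).ne') hb.1
  have hparam : ∀ p ∈ L, 0 ≤ g (p - x) ∧ p = x + g (p - x) • b := by
    rintro _ ⟨-, s, hs, rfl⟩
    simp [hgb, hs]
  obtain ⟨v₀, ⟨hv₀, hv₀x⟩, hb₀⟩ := extremePoints_convexHull_subset hb
  have hv₀L : v₀ ∈ L := ⟨subset_convexHull 𝕜 _ hv₀, g (v₀ - x), (hg v₀ hv₀ hv₀x).le, by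
    rw [← hb₀, smul_inv_smul₀ (hg v₀ hv₀ hv₀x).ne']; abel⟩
  obtain ⟨y, hy, hymax⟩ := (V.filter (· ∈ L)).exists_max_image (fun v ↦ g (v - x))
    ⟨v₀, Finset.mem_filter.2 ⟨hv₀, hv₀L⟩⟩
  have hyL := (Finset.mem_filter.1 hy).2
  have hty : 0 < g (y - x) :=
    (hg v₀ hv₀ hv₀x).trans_le (hymax v₀ (Finset.mem_filter.2 ⟨hv₀, hv₀L⟩))
  refine ⟨g (y - x), hty, Subset.antisymm ?_ ?_⟩
  · refine (isExtreme_inter_ray hg hb).subset_convexHull_inter.trans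
      (convexHull_min ?_ (convex_segment _ _))
    rintro v ⟨hv, hvL⟩
    rw [segment_eq_image']
    refine ⟨g (v - x) / g (y - x), ⟨div_nonneg (hparam v hvL).1 hty.le,
      (div_le_one hty).2 (hymax v (Finset.mem_filter.2 ⟨hv, hvL⟩))⟩, ?_⟩
    dsimp only
    rw [add_sub_cancel_left, smul_smul, div_mul_cancel₀ _ hty.ne', ← (hparam v hvL).2]
  · rw [← (hparam y hyL).2]
    intro z hz
    refine ⟨(convex_convexHull 𝕜 _).segment_subset hx hyL.1 hz, ?_⟩
    rw [segment_eq_image'] at hz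
    obtain ⟨θ, ⟨hθ, -⟩, rfl⟩ := hz
    refine ⟨θ * g (y - x), mul_nonneg hθ hty.le, ?_⟩
    conv_lhs => rw [(hparam y hyL).2]
    dsimp only
    rw [add_sub_cancel_left, smul_smul]

end Ray

section LocallyConvex

variable {E : Type*} [AddCommGroup E] [Module ℝ E] [TopologicalSpace E] [IsTopologicalAddGroup E]
  [ContinuousSMul ℝ E] [LocallyConvexSpace ℝ E] [T2Space E] {V : Finset E} {x : E}

theorem exists_mem_extremePoints_lt {K : Set E} (hK : IsCompact K) (hKc : Convex ℝ K)
    (f : StrongDual ℝ E) {c : E} (hc : c ∈ K) {a : ℝ} (hca : f c < a) :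
    ∃ b ∈ K.extremePoints ℝ, f b < a := by
  by_contra! h
  have hKa : K ⊆ {y | a ≤ f y} := by
    rw [← closure_convexHull_extremePoints hK hKc]
    exact closure_minimal (convexHull_min h (convex_halfSpace_ge f.isLinear a))
      (isClosed_le continuous_const f.continuous)
  exact (hKa hc).not_gt hca

theorem exists_pos_sub_of_mem_extremePoints_convexHull
    (hx : x ∈ (convexHull ℝ (V : Set E)).extremePoints ℝ) :
    ∃ g : E →ₗ[ℝ] ℝ, ∀ v ∈ V, v ≠ x → 0 < g (v - x) := by
  have hxK : x ∉ convexHull ℝ (↑V \ {x}) := fun h ↦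
    ((convex_convexHull ℝ _).mem_extremePoints_iff_mem_sdiff_convexHull_sdiff.1 hx).2
      (convexHull_mono (sdiff_subset_sdiff_left (subset_convexHull ℝ _)) h)
  obtain ⟨g, u, hgx, hgK⟩ := geometric_hahn_banach_point_closed (convex_convexHull ℝ _)
    (V.finite_toSet.sdiff.isCompact_convexHull ℝ).isClosed hxK
  refine ⟨g, fun v hv hvx ↦ ?_⟩
  rw [ContinuousLinearMap.coe_coe, map_sub, sub_pos]
  exact hgx.trans (hgK v (subset_convexHull ℝ _ ⟨hv, hvx⟩))

theorem exists_isExtreme_segment_lt_s15 (hx : x ∈ (convexHull ℝ (V : Set E)).extremePoints ℝ)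
    (f : StrongDual ℝ E) {p : E} (hp : p ∈ convexHull ℝ (V : Set E)) (hfp : f p < f x) :
    ∃ y, y ≠ x ∧ IsExtreme ℝ (convexHull ℝ (V : Set E)) (segment ℝ x y) ∧ f y < f x := by
  obtain ⟨g, hg⟩ := exists_pos_sub_of_mem_extremePoints_convexHull hx
  obtain ⟨v, hv, hfv⟩ := ((f : E →ₗ[ℝ] ℝ).concaveOn (convex_convexHull ℝ _)
    ).exists_le_of_mem_convexHull (subset_convexHull ℝ _) hp
  replace hfv : f v < f x := hfv.trans_lt hfp
  have hvx : v ≠ x := by rintro rfl; exact hfv.false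
  obtain ⟨b, hb, hfb⟩ := exists_mem_extremePoints_lt
    ((V.finite_toSet.sdiff.image _).isCompact_convexHull ℝ) (convex_convexHull ℝ _) f
    (subset_convexHull ℝ _ ⟨v, ⟨hv, hvx⟩, rfl⟩ : (g (v - x))⁻¹ • (v - x) ∈ vertexFigure V x g)
    (a := 0) (by
      rw [map_smul, smul_eq_mul]
      exact mul_neg_of_pos_of_neg (inv_pos.2 (hg v hv hvx)) (by rwa [map_sub, sub_neg]))
  obtain ⟨t, ht, hseg⟩ := exists_inter_ray_eq_segment hg hx.1 hb
  refine ⟨x + t • b, ?_, hseg ▸ isExtreme_inter_ray hg hb, ?_⟩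
  · have hb0 : b ≠ 0 := by
      rintro rfl
      simpa using map_eq_one_of_mem_vertexFigure (fun v hv hvx ↦ (hg v hv hvx).ne') hb.1
    simpa using smul_ne_zero ht.ne' hb0
  · simpa using mul_neg_of_pos_of_neg ht hfb

end LocallyConvex

theorem SimpleGraph.exists_dist_le_of_forall_exists_adj {α : Type*} (G : SimpleGraph α)
    {A S : Set α} (φ : α → ℝ) (hφ : ∀ y ∈ A, 0 ≤ φ y)
    (hstep : ∀ y ∈ A, y ∉ S → ∃ z ∈ A, G.Adj y z ∧ φ z + 1 ≤ φ y) {y : α} (hy : y ∈ A) :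
    ∃ s ∈ S, (G.dist y s : ℝ) ≤ φ y := by
  suffices h : ∀ n : ℕ, ∀ y ∈ A, φ y < n → ∃ s ∈ S, ∃ w : G.Walk y s, (w.length : ℝ) ≤ φ y by
    obtain ⟨n, hn⟩ := exists_nat_gt (φ y)
    obtain ⟨s, hs, w, hw⟩ := h n y hy hn
    exact ⟨s, hs, (Nat.cast_le.2 (SimpleGraph.dist_le w)).trans hw⟩
  intro n
  induction n with
  | zero => exact fun y hy hφy ↦ absurd (hφ y hy) (by simpa using hφy)
  | succ n ih =>
    intro y hy hφy
    by_cases hyS : y ∈ S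
    · exact ⟨y, hyS, .nil, by simpa using hφ y hy⟩
    obtain ⟨z, hz, hyz, hφz⟩ := hstep y hy hyS
    obtain ⟨s, hs, w, hw⟩ := ih z hz (by push_cast at hφy; linarith)
    exact ⟨s, hs, .cons hyz w, by push_cast [SimpleGraph.Walk.length_cons]; linarith⟩

theorem polytopeGraph_exists_adj_lt {d : ℕ} {V : Finset (Fin d → ℝ)} {x p : Fin d → ℝ}
    (hx : x ∈ (convexHull ℝ (V : Set (Fin d → ℝ))).extremePoints ℝ)
    (f : StrongDual ℝ (Fin d → ℝ)) (hp : p ∈ convexHull ℝ (V : Set (Fin d → ℝ)))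
    (hfp : f p < f x) :
    ∃ y, (polytopeGraph (convexHull ℝ (V : Set (Fin d → ℝ)))).Adj x y ∧ f y < f x := by
  obtain ⟨y, hyx, hxy, hfy⟩ := exists_isExtreme_segment_lt_s15 hx f hp hfp
  exact ⟨y, ⟨hyx.symm, hx,
    hxy.extremePoints_subset_extremePoints (right_mem_extremePoints_segment_s15 hyx.symm), hxy⟩, hfy⟩

theorem IsLatticePolytope.exists_adj_coord_add_one_le {d k : ℕ} {P : Set (Fin d → ℝ)}
    (hP : IsLatticePolytope d k P) {y p : Fin d → ℝ} (hy : y ∈ P.extremePoints ℝ) (hp : p ∈ P)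
    {j : Fin d} (hpy : p j < y j) :
    ∃ z ∈ P.extremePoints ℝ, (polytopeGraph P).Adj y z ∧ z j + 1 ≤ y j := by
  obtain ⟨V, hV, rfl⟩ := hP
  obtain ⟨z, hyz, hzy⟩ := polytopeGraph_exists_adj_lt hy (ContinuousLinearMap.proj j) hp hpy
  obtain ⟨m, -, hm⟩ := hV z (extremePoints_convexHull_subset hyz.2.2.1) j
  obtain ⟨n, -, hn⟩ := hV y (extremePoints_convexHull_subset hy) j
  simp only [ContinuousLinearMap.proj_apply, hm, hn, Nat.cast_lt] at hzy
  exact ⟨z, hyz.2.2.1, hyz, by rw [hm, hn]; exact_mod_cast hzy⟩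

/-- Let `P` be a lattice `(d,k)`-polytope, `j` a coordinate index, `l` the minimum of
`x j` over `x ∈ P`, and `F = P ∩ {x : x j = l}`. Then every vertex `x` of `P`
satisfies `d(x,F) ≤ x j − l`. -/
theorem distToFace_le_coord (d k : ℕ) (P : Set (Fin d → ℝ))
    (hP : IsLatticePolytope d k P) (j : Fin d) (l : ℝ)
    (hl : IsLeast {t : ℝ | ∃ x ∈ P, x j = t} l)
    (F : Set (Fin d → ℝ)) (hF : F = {x ∈ P | x j = l})
    (x : Fin d → ℝ) (hx : x ∈ P.extremePoints ℝ) :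
    (distToFace P x F : ℝ) ≤ x j - l := by
  have hlP : ∀ p ∈ P, l ≤ p j := fun p hp ↦ hl.2 ⟨p, hp, rfl⟩
  have hstep : ∀ y ∈ P.extremePoints ℝ, y ∉ F.extremePoints ℝ →
      ∃ z ∈ P.extremePoints ℝ, (polytopeGraph P).Adj y z ∧ z j - l + 1 ≤ y j - l := by
    intro y hy hyF
    have hly : l < y j := (hlP y hy.1).lt_of_ne fun h ↦ hyF <| hF ▸
      inter_extremePoints_subset_extremePoints_of_subset (sep_subset _ _) ⟨⟨hy.1, h.symm⟩, hy⟩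
    obtain ⟨p, hp, hpj⟩ := hl.1
    obtain ⟨z, hz, hyz, hzy⟩ := hP.exists_adj_coord_add_one_le hy hp (hpj ▸ hly)
    exact ⟨z, hz, hyz, by linarith⟩
  obtain ⟨s, hs, hdist⟩ := (polytopeGraph P).exists_dist_le_of_forall_exists_adj
    (fun y ↦ y j - l) (fun y hy ↦ sub_nonneg.2 (hlP y hy.1)) hstep hx
  have hsInf : distToFace P x F ≤ (polytopeGraph P).dist x s := Nat.sInf_le ⟨s, hs, rfl⟩
  exact (Nat.cast_le.2 hsInf).trans hdist
end
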